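/- Fix x₀ ∈ ℝ and α, β > 0, and let μ = (α/(α+β)) δ₀ + (β/(α+β)) δ_{x₀} be the two-point mixture of Dirac masses at 0 and x₀. Then for t > 0, the density μ*γ_t on ℝ is log-concave if and only if t ≥ x₀²/4. -/

import Mathlib

noncomputable section
open Real MeasureTheory

/-- Centered Gaussian density on `ℝ` with variance `t`. -/
def gaussDensity1 (t x : ℝ) : ℝ :=
  (2 * π * t) ^ (-(1 : ℝ) / 2) * Real.exp (-x ^ 2 / (2 * t))

/-- The density of `μ * γ_t` for the two-point mixture
`μ = (α/(α+β)) δ₀ + (β/(α+β)) δ_{x₀}`. -/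
def twoPointHeat (α β x₀ t z : ℝ) : ℝ :=
  α / (α + β) * gaussDensity1 t z + β / (α + β) * gaussDensity1 t (z - x₀)

/-!
Write `u = a γ_t(z)` and `v = b γ_t(z - x₀)` for the two components of the mixture `f` at `z`.
Since `γ_t' = -(x/t) γ_t`, a direct computation gives
`t² (u + v)² · (-(log f)''(z)) = t (u + v)² - x₀² u v`.
By AM-GM `(u + v)² ≥ 4 u v`, with equality exactly when `u = v`; and for `x₀ ≠ 0` the ratio
`v / u = (b / a) exp ((2 z x₀ - x₀²) / (2t))` takes every positive value, in particular `1`.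
So `-(log f)'' ≥ 0` everywhere if and only if `4t ≥ x₀²`.
-/

theorem deriv_deriv_log_of_hasDerivAt {f f' f'' : ℝ → ℝ} (hf : ∀ x, HasDerivAt f (f' x) x)
    (hf' : ∀ x, HasDerivAt f' (f'' x) x) (hf0 : ∀ x, f x ≠ 0) (x : ℝ) :
    deriv (deriv fun y => Real.log (f y)) x = (f'' x * f x - f' x ^ 2) / f x ^ 2 := by
  have hlog : deriv (fun y => Real.log (f y)) = fun y => f' y / f y :=
    funext fun y => ((hf y).log (hf0 y)).deriv
  rw [hlog]
  exact ((hf' x).div (hf x) (hf0 x)).deriv.trans (by ring)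

theorem gaussDensity1_pos {t : ℝ} (ht : 0 < t) (x : ℝ) : 0 < gaussDensity1 t x := by
  unfold gaussDensity1
  positivity

theorem gaussDensity1_sub (t x c : ℝ) :
    gaussDensity1 t (x - c) = gaussDensity1 t x * Real.exp ((2 * x * c - c ^ 2) / (2 * t)) := by
  unfold gaussDensity1
  rw [mul_assoc _ (Real.exp _), ← Real.exp_add]
  ring_nf

theorem hasDerivAt_gaussDensity1_sub (t c x : ℝ) :
    HasDerivAt (fun y => gaussDensity1 t (y - c)) (-((x - c) / t) * gaussDensity1 t (x - c)) x := by
  have hexp : HasDerivAt (fun y => -(y - c) ^ 2 / (2 * t)) (-((x - c) / t)) x :=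
    ((((hasDerivAt_id x).sub_const c).pow 2).neg.div_const (2 * t)).congr_deriv
      (by simp only [id_eq, Nat.add_one_sub_one, pow_one]; ring)
  exact (hexp.exp.const_mul ((2 * π * t) ^ (-(1 : ℝ) / 2))).congr_deriv
    (by unfold gaussDensity1; ring)

theorem hasDerivAt_mul_gaussDensity1_sub (t c x : ℝ) :
    HasDerivAt (fun y => -((y - c) / t) * gaussDensity1 t (y - c))
      ((((x - c) / t) ^ 2 - 1 / t) * gaussDensity1 t (x - c)) x :=
  ((((hasDerivAt_id x).sub_const c).div_const t).neg.mul
    (hasDerivAt_gaussDensity1_sub t c x)).congr_deriv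
      (by simp only [id_eq, Pi.neg_apply]; ring)

theorem neg_deriv_deriv_log_gaussMixture (x₀ : ℝ) {a b t : ℝ} (ha : 0 < a) (hb : 0 < b)
    (ht : 0 < t) (z : ℝ) :
    -deriv (deriv fun y => Real.log (a * gaussDensity1 t y + b * gaussDensity1 t (y - x₀))) z =
      (t * (a * gaussDensity1 t z + b * gaussDensity1 t (z - x₀)) ^ 2 -
          x₀ ^ 2 * (a * gaussDensity1 t z * (b * gaussDensity1 t (z - x₀)))) /
        (t ^ 2 * (a * gaussDensity1 t z + b * gaussDensity1 t (z - x₀)) ^ 2) := by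
  have hG₀ := hasDerivAt_gaussDensity1_sub t 0
  have hG₀' := hasDerivAt_mul_gaussDensity1_sub t 0
  simp only [sub_zero] at hG₀ hG₀'
  have hpos : ∀ y, 0 < a * gaussDensity1 t y + b * gaussDensity1 t (y - x₀) := fun y => by
    have := gaussDensity1_pos ht y
    have := gaussDensity1_pos ht (y - x₀)
    positivity
  have hf : ∀ y, HasDerivAt (fun y => a * gaussDensity1 t y + b * gaussDensity1 t (y - x₀))
      (a * (-(y / t) * gaussDensity1 t y) + b * (-((y - x₀) / t) * gaussDensity1 t (y - x₀))) y :=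
    fun y => ((hG₀ y).const_mul a).add ((hasDerivAt_gaussDensity1_sub t x₀ y).const_mul b)
  have hf' : ∀ y, HasDerivAt (fun y =>
        a * (-(y / t) * gaussDensity1 t y) + b * (-((y - x₀) / t) * gaussDensity1 t (y - x₀)))
      (a * (((y / t) ^ 2 - 1 / t) * gaussDensity1 t y) +
        b * ((((y - x₀) / t) ^ 2 - 1 / t) * gaussDensity1 t (y - x₀))) y :=
    fun y => ((hG₀' y).const_mul a).add ((hasDerivAt_mul_gaussDensity1_sub t x₀ y).const_mul b)
  rw [deriv_deriv_log_of_hasDerivAt hf hf' fun y => (hpos y).ne']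
  have hfz := (hpos z).ne'
  field_simp
  ring

theorem exists_mul_gaussDensity1_eq_mul_gaussDensity1_sub {x₀ : ℝ} (hx₀ : x₀ ≠ 0) {a b : ℝ}
    (ha : 0 < a) (hb : 0 < b) {t : ℝ} (ht : 0 < t) :
    ∃ z, a * gaussDensity1 t z = b * gaussDensity1 t (z - x₀) := by
  refine ⟨(x₀ ^ 2 + 2 * t * Real.log (a / b)) / (2 * x₀), ?_⟩
  rw [gaussDensity1_sub]
  have hexp : (2 * ((x₀ ^ 2 + 2 * t * Real.log (a / b)) / (2 * x₀)) * x₀ - x₀ ^ 2) / (2 * t) =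
      Real.log (a / b) := by
    field_simp
    ring
  rw [hexp, Real.exp_log (div_pos ha hb)]
  field_simp

theorem gaussMixture_log_concave_iff (x₀ : ℝ) {a b t : ℝ} (ha : 0 < a) (hb : 0 < b)
    (ht : 0 < t) :
    (∀ z, 0 ≤ -deriv (deriv fun y =>
        Real.log (a * gaussDensity1 t y + b * gaussDensity1 t (y - x₀))) z) ↔
      x₀ ^ 2 / 4 ≤ t := by
  simp only [neg_deriv_deriv_log_gaussMixture x₀ ha hb ht]
  constructor
  · intro h
    rcases eq_or_ne x₀ 0 with rfl | hx₀
    · simpa using ht.le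
    obtain ⟨z, hz⟩ := exists_mul_gaussDensity1_eq_mul_gaussDensity1_sub hx₀ ha hb ht
    have hu : 0 < a * gaussDensity1 t z := mul_pos ha (gaussDensity1_pos ht z)
    have hz' := h z
    rw [← hz, le_div_iff₀ (by positivity), zero_mul] at hz'
    nlinarith [mul_pos hu hu]
  · intro h z
    have hu : 0 < a * gaussDensity1 t z := mul_pos ha (gaussDensity1_pos ht z)
    have hv : 0 < b * gaussDensity1 t (z - x₀) := mul_pos hb (gaussDensity1_pos ht _)
    refine div_nonneg ?_ (by positivity)
    nlinarith [sq_nonneg (a * gaussDensity1 t z - b * gaussDensity1 t (z - x₀)), mul_pos hu hv]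

/-- **Proposition 9.** For `μ = (α/(α+β)) δ₀ + (β/(α+β)) δ_{x₀}` and `t > 0`, the density
`μ * γ_t` is log-concave (i.e. `-(log(μ*γ_t))'' ≥ 0` everywhere) if and only if
`t ≥ x₀²/4`. -/
theorem two_point_mixture_log_concave_iff
    (x₀ α β : ℝ) (hα : 0 < α) (hβ : 0 < β) (t : ℝ) (ht : 0 < t) :
    (∀ z : ℝ, 0 ≤ -(deriv (deriv (fun y => Real.log (twoPointHeat α β x₀ t y))) z))
      ↔ x₀ ^ 2 / 4 ≤ t :=
  gaussMixture_log_concave_iff x₀ (by positivity) (by positivity) ht
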